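/- A best match graph (G,σ) is binary explainable (i.e., there exists a binary leaf-colored tree (T,σ) with 𝔅(T,σ) = (G,σ)) if and only if the triple set R^B(G,σ) := R(G,σ) ∪ { bb'|a : ab|b' ∈ F(G,σ) } is consistent. -/

import Mathlib

/-- A planted phylogenetic rooted tree, encoded by a parent function on a
finite vertex set.  The root `0_T` is a fixed point of `parent`; every vertex
reaches the root by iterating `parent`; the root has exactly one child
(`planted`); and every inner vertex (non-root vertex having a child) has at
least two children (`phylo`). -/
structure PPTree where
  V : Type
  [fintypeV : Fintype V]
  [decEqV : DecidableEq V]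
  root : V
  parent : V → V
  parent_root : parent root = root
  reach : ∀ v : V, ∃ n : ℕ, parent^[n] v = root
  planted : ∃! v : V, v ≠ root ∧ parent v = root
  phylo : ∀ v : V, v ≠ root → (∃ u, parent u = v ∧ u ≠ v) →
      ∃ u w, parent u = v ∧ parent w = v ∧ u ≠ w ∧ u ≠ v ∧ w ≠ v

attribute [instance] PPTree.fintypeV PPTree.decEqV

namespace PPTree

variable (T : PPTree)

/-- `T.le x y` means `x ⪯_T y`, i.e. `y` is an ancestor of `x` (or `x = y`). -/
def le (x y : T.V) : Prop := ∃ n : ℕ, T.parent^[n] x = y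

/-- `T.lt x y` means `x ≺_T y`. -/
def lt (x y : T.V) : Prop := T.le x y ∧ x ≠ y

/-- Leaves are the `⪯_T`-minimal vertices, i.e. vertices without children. -/
def isLeaf (v : T.V) : Prop := ∀ u, T.parent u = v → u = v

/-- Inner vertices: neither leaves nor the planted root. -/
def inner (v : T.V) : Prop := v ≠ T.root ∧ ¬ T.isLeaf v

/-- The last common ancestor of two vertices: the `⪯_T`-minimal common
ancestor. -/
noncomputable def lca (x y : T.V) : T.V :=
  @Classical.epsilon _ ⟨T.root⟩
    fun v => T.le x v ∧ T.le y v ∧ ∀ w, T.le x w → T.le y w → T.le v w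

/-- The last common ancestor of a set of vertices. -/
noncomputable def lcaSet (A : Set T.V) : T.V :=
  @Classical.epsilon _ ⟨T.root⟩
    fun v => (∀ a ∈ A, T.le a v) ∧ ∀ w, (∀ a ∈ A, T.le a w) → T.le v w

/-- `ρ_T`, the unique child of the planted root. -/
noncomputable def rho : T.V := T.planted.choose

theorem rho_ne_root : T.rho ≠ T.root := T.planted.choose_spec.1.1

/-- Edges of `T`, identified with their child endpoint: the vertex `v ≠ 0_T`
represents the edge `(parent v, v)`. -/
abbrev Edge := {v : T.V // v ≠ T.root}

/-- The union `V(T) ∪ E(T)`. -/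
abbrev VE := T.V ⊕ T.Edge

/-- The ancestor order `⪯_T` extended to `V(T) ∪ E(T)`: for an edge `e = uv`
(`u` the parent of `v`), `x ⪯ e` iff `x ⪯ v`, `e ⪯ x` iff `u ⪯ x`, and
`e ⪯ f` iff the child endpoints are comparable accordingly. -/
def leVE : T.VE → T.VE → Prop
  | Sum.inl x, Sum.inl y => T.le x y
  | Sum.inl x, Sum.inr e => T.le x e.1
  | Sum.inr e, Sum.inl y => T.le (T.parent e.1) y
  | Sum.inr e, Sum.inr f => T.le e.1 f.1

def ltVE (a b : T.VE) : Prop := T.leVE a b ∧ a ≠ b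

/-- Two elements of `V(T) ∪ E(T)` are comparable. -/
def cmpVE (a b : T.VE) : Prop := T.leVE a b ∨ T.leVE b a

/-- Membership in `L(T)` for elements of `V(T) ∪ E(T)`. -/
def isLeafVE : T.VE → Prop
  | Sum.inl v => T.isLeaf v
  | Sum.inr _ => False

/-- Map an element of `V(T) ∪ E(T)` to a vertex (an edge `uv` is sent to its
child endpoint `v`). -/
def toVertex : T.VE → T.V
  | Sum.inl v => v
  | Sum.inr e => e.1

end PPTree

/-- Axioms (R0)–(R3) of a reconciliation map `μ : V(T) → V(S) ∪ E(S)`. -/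
structure IsRecon (T S : PPTree) (μ : T.V → S.VE) : Prop where
  R0 : ∀ x, μ x = Sum.inl S.root ↔ x = T.root
  R1 : ∀ x, S.isLeafVE (μ x) ↔ T.isLeaf x
  R2 : ∀ x y, T.lt y x → (∃ u, μ x = Sum.inl u) → (∃ v, μ y = Sum.inl v) → μ x ≠ μ y
  R3 : ∀ x y, T.lt y x → ¬ S.ltVE (μ x) (μ y)

/-- A reconciliation is HGT-free if the images of the endpoints of every edge
of `T` are `⪯_S`-comparable. -/
def IsHGTFree (T S : PPTree) (μ : T.V → S.VE) : Prop :=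
  ∀ v : T.V, v ≠ T.root → S.cmpVE (μ (T.parent v)) (μ v)

/-- `(T,S,μ,σ)` is a σ-reconciliation when `μ` restricted to `L(T)` equals
`σ`. -/
def SigmaCompat (T S : PPTree) (μ : T.V → S.VE) (σ : T.V → S.V) : Prop :=
  ∀ x, T.isLeaf x → μ x = Sum.inl (σ x)

/-- A time map for `T`. -/
def IsTimeMap (T : PPTree) (τ : T.V → ℝ) : Prop :=
  ∀ x y, T.lt x y → τ x < τ y

/-- Axioms (S0)–(S3) of a relaxed scenario `(T,S,μ,τ_T,τ_S)`. -/
structure IsRelaxedScenario (T S : PPTree) (μ : T.V → S.VE)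
    (τT : T.V → ℝ) (τS : S.V → ℝ) : Prop where
  timeT : IsTimeMap T τT
  timeS : IsTimeMap S τS
  S0 : ∀ x, μ x = Sum.inl S.root ↔ x = T.root
  S1 : ∀ x, S.isLeafVE (μ x) ↔ T.isLeaf x
  S2 : ∀ x v, μ x = Sum.inl v → τS v = τT x
  S3 : ∀ x (e : S.Edge), μ x = Sum.inr e → τS e.1 < τT x ∧ τT x < τS (S.parent e.1)

/-- A planted phylogenetic tree whose leaf set is (identified with) the finite
type `L` via the embedding `emb`. -/
structure LeafTree (L : Type) [Fintype L] [DecidableEq L] extends PPTree where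
  emb : L → toPPTree.V
  emb_inj : Function.Injective emb
  emb_leaf : ∀ v : L, toPPTree.isLeaf (emb v)
  emb_surj : ∀ l, toPPTree.isLeaf l → ∃ v : L, emb v = l

/-- The tree `T` displays the rooted triple `ab|c`:
`lca(a,b) ≺ lca(a,c) = lca(b,c)`. -/
def displaysTriple (T : PPTree) (a b c : T.V) : Prop :=
  T.lt (T.lca a b) (T.lca a c) ∧ T.lca a c = T.lca b c

section BMG

variable {V Y : Type} [Fintype V] [DecidableEq V]

/-- `y` is a best match of `x` in the leaf-colored tree `(T,σ)`:
`σ(x) ≠ σ(y)` and `lca(x,y) ⪯ lca(x,y')` for all leaves `y'` of the same color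
as `y`. -/
def LeafTree.bestMatch (T : LeafTree V) (σ : V → Y) (x y : V) : Prop :=
  σ x ≠ σ y ∧ ∀ y' : V, σ y' = σ y →
    T.toPPTree.le (T.toPPTree.lca (T.emb x) (T.emb y))
      (T.toPPTree.lca (T.emb x) (T.emb y'))

/-- `(G,σ)` is the best match graph `𝔅(T,σ)` of the leaf-colored tree
`(T,σ)`. -/
def Explains (T : LeafTree V) (σ : V → Y) (G : V → V → Prop) : Prop :=
  ∀ x y : V, G x y ↔ T.bestMatch σ x y

/-- The triple `ab|b'` is informative for `(G,σ)`. -/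
def Informative (G : V → V → Prop) (σ : V → Y) (a b b' : V) : Prop :=
  a ≠ b ∧ a ≠ b' ∧ b ≠ b' ∧ σ a ≠ σ b ∧ σ b = σ b' ∧ G a b ∧ ¬ G a b'

/-- The triple `ab|b'` is forbidden for `(G,σ)`. -/
def Forbidden (G : V → V → Prop) (σ : V → Y) (a b b' : V) : Prop :=
  a ≠ b ∧ a ≠ b' ∧ b ≠ b' ∧ σ a ≠ σ b ∧ σ b = σ b' ∧ G a b ∧ G a b'

end BMG

/-- A tree is binary if every inner vertex has exactly two children. -/
def IsBinary (T : PPTree) : Prop :=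
  ∀ v : T.V, T.inner v →
    ∃ a b : T.V, a ≠ b ∧ T.parent a = v ∧ T.parent b = v ∧ a ≠ v ∧ b ≠ v ∧
      ∀ c : T.V, T.parent c = v → c ≠ v → c = a ∨ c = b

/-! In a tree explaining `(G,σ)`, an informative triple `ab|b'` is displayed because `b'` is
not a best match of `a`. If the tree is binary and `ab|b'` is forbidden, then
`lca(a,b) = lca(a,b')` has only two children, neither of which contains `a` together with `b`
or `b'`; hence `b` and `b'` lie below the same child and `bb'|a` is displayed.

Conversely, in a tree displaying `R^B(G,σ)`, for an arc `x → y` and a leaf `y'` coloured like `y`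
the triple of `R^B` on `{x, y, y'}` forces `lca(x,y) ⪯ lca(x,y')`; and for a non-arc `x → y`,
an arc `x → y''` to the colour of `y` (which exists since `(G,σ)` is a BMG) gives the informative
triple `xy''|y`, so `y` is no best match. The tree is then made binary without losing triples:
`xy|z` is displayed iff some cluster contains `x` and `y` but not `z`, and pushing all
children but one of a vertex with at least three children below a new vertex keeps all
clusters and decreases `∑ (#children - 2)`. -/

namespace PPTree

variable {T : PPTree}

theorem le_refl (x : T.V) : T.le x x := ⟨0, rfl⟩

theorem le_trans {x y z : T.V} (hxy : T.le x y) (hyz : T.le y z) : T.le x z := by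
  obtain ⟨n, rfl⟩ := hxy
  obtain ⟨m, rfl⟩ := hyz
  exact ⟨m + n, Function.iterate_add_apply _ _ _ _⟩

theorem le_parent (x : T.V) : T.le x (T.parent x) := ⟨1, rfl⟩

theorem le_root (x : T.V) : T.le x T.root := T.reach x

theorem iterate_parent_root (n : ℕ) : T.parent^[n] T.root = T.root :=
  Function.iterate_fixed T.parent_root n

theorem eq_root_of_isPeriodicPt {n : ℕ} {x : T.V} (hn : 0 < n)
    (hx : Function.IsPeriodicPt T.parent n x) : x = T.root := by
  obtain ⟨r, hr⟩ := T.reach x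
  have hle : r ≤ n * r := Nat.le_mul_of_pos_left r hn
  calc x = T.parent^[n * r] x := (hx.mul_const r).eq.symm
    _ = T.parent^[n * r - r] (T.parent^[r] x) := by
      rw [← Function.iterate_add_apply, Nat.sub_add_cancel hle]
    _ = T.root := by rw [hr, iterate_parent_root]

theorem le_antisymm {x y : T.V} (hxy : T.le x y) (hyx : T.le y x) : x = y := by
  obtain ⟨n, rfl⟩ := hxy
  obtain ⟨m, hm⟩ := hyx
  rcases Nat.eq_zero_or_pos n with rfl | hn
  · rfl
  have hx : Function.IsPeriodicPt T.parent (m + n) x := by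
    rw [Function.IsPeriodicPt, Function.IsFixedPt, Function.iterate_add_apply, hm]
  rw [eq_root_of_isPeriodicPt (by omega) hx, iterate_parent_root]

theorem le_total_of_le_of_le {x u w : T.V} (hu : T.le x u) (hw : T.le x w) :
    T.le u w ∨ T.le w u := by
  obtain ⟨n, rfl⟩ := hu
  obtain ⟨m, rfl⟩ := hw
  rcases Nat.le_total n m with h | h
  · exact Or.inl ⟨m - n, by rw [← Function.iterate_add_apply, Nat.sub_add_cancel h]⟩
  · exact Or.inr ⟨n - m, by rw [← Function.iterate_add_apply, Nat.sub_add_cancel h]⟩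

theorem exists_child_of_lt {x v : T.V} (h : T.lt x v) :
    ∃ c, T.parent c = v ∧ c ≠ v ∧ T.le x c := by
  obtain ⟨⟨n, hn⟩, hne⟩ := h
  induction n generalizing x with
  | zero => exact absurd hn hne
  | succ n ih =>
    by_cases hp : T.parent x = v
    · exact ⟨x, hp, hne, le_refl x⟩
    · obtain ⟨c, hc, hcv, hxc⟩ := ih hp hn
      exact ⟨c, hc, hcv, le_trans (le_parent x) hxc⟩

theorem not_le_of_parent_eq {c v : T.V} (hc : T.parent c = v) (hcv : c ≠ v) : ¬ T.le v c :=
  fun h => hcv (le_antisymm (hc ▸ le_parent c) h)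

theorem eq_of_le_of_isLeaf {x a : T.V} (ha : T.isLeaf a) (h : T.le x a) : x = a := by
  by_contra hne
  obtain ⟨c, hc, hca, -⟩ := exists_child_of_lt ⟨h, hne⟩
  exact hca (ha c hc)

theorem eq_rho {c : T.V} (hc : c ≠ T.root) (hp : T.parent c = T.root) : c = T.rho :=
  T.planted.choose_spec.2 c ⟨hc, hp⟩

theorem parent_rho : T.parent T.rho = T.root := T.planted.choose_spec.1.2

theorem le_rho {x : T.V} (hx : x ≠ T.root) : T.le x T.rho := by
  obtain ⟨c, hc, hcr, hxc⟩ := exists_child_of_lt ⟨le_root x, hx⟩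
  exact eq_rho hcr hc ▸ hxc

theorem ne_root_of_isLeaf {x : T.V} (hx : T.isLeaf x) : x ≠ T.root := by
  rintro rfl
  exact T.rho_ne_root (hx T.rho parent_rho)

theorem exists_least_ancestor {x : T.V} {P : T.V → Prop} (h : ∃ w, T.le x w ∧ P w) :
    ∃ v, T.le x v ∧ P v ∧ ∀ w, T.le x w → P w → T.le v w := by
  classical
  have hP : ∃ n, P (T.parent^[n] x) := by
    obtain ⟨w, ⟨n, rfl⟩, hw⟩ := h
    exact ⟨n, hw⟩
  refine ⟨_, ⟨Nat.find hP, rfl⟩, Nat.find_spec hP, ?_⟩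
  rintro w ⟨n, rfl⟩ hw
  exact ⟨n - Nat.find hP, by
    rw [← Function.iterate_add_apply, Nat.sub_add_cancel (Nat.find_min' hP hw)]⟩

theorem lca_spec (x y : T.V) :
    T.le x (T.lca x y) ∧ T.le y (T.lca x y) ∧
      ∀ w, T.le x w → T.le y w → T.le (T.lca x y) w :=
  Classical.epsilon_spec (exists_least_ancestor ⟨T.root, le_root x, le_root y⟩)

theorem le_lca_left (x y : T.V) : T.le x (T.lca x y) := (lca_spec x y).1

theorem le_lca_right (x y : T.V) : T.le y (T.lca x y) := (lca_spec x y).2.1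

theorem lca_le {x y w : T.V} (hx : T.le x w) (hy : T.le y w) : T.le (T.lca x y) w :=
  (lca_spec x y).2.2 w hx hy

theorem lca_comm (x y : T.V) : T.lca x y = T.lca y x :=
  le_antisymm (lca_le (le_lca_right y x) (le_lca_left y x))
    (lca_le (le_lca_right x y) (le_lca_left x y))

theorem le_lca_of_not_le {x z w : T.V} (hx : T.le x w) (hz : ¬ T.le z w) :
    T.le w (T.lca x z) :=
  (le_total_of_le_of_le (le_lca_left x z) hx).resolve_left
    fun h => hz (le_trans (le_lca_right x z) h)

theorem lt_lca_of_isLeaf {x y : T.V} (hx : T.isLeaf x) (hxy : x ≠ y) : T.lt x (T.lca x y) :=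
  ⟨le_lca_left x y, fun h => hxy (eq_of_le_of_isLeaf hx (h ▸ le_lca_right x y)).symm⟩

theorem lca_ne_root {x y : T.V} (hx : x ≠ T.root) (hy : y ≠ T.root) : T.lca x y ≠ T.root :=
  fun h => T.rho_ne_root (le_antisymm (le_root _) (h ▸ lca_le (le_rho hx) (le_rho hy)))

end PPTree

open PPTree

theorem displaysTriple_iff {T : PPTree} {x y z : T.V} :
    displaysTriple T x y z ↔ ∃ w, T.le x w ∧ T.le y w ∧ ¬ T.le z w := by
  constructor
  · rintro ⟨⟨hle, hne⟩, -⟩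
    exact ⟨T.lca x y, le_lca_left x y, le_lca_right x y,
      fun hz => hne (le_antisymm hle (lca_le (le_lca_left x y) hz))⟩
  · rintro ⟨w, hxw, hyw, hzw⟩
    have hxz : T.le w (T.lca x z) := le_lca_of_not_le hxw hzw
    have hyz : T.le w (T.lca y z) := le_lca_of_not_le hyw hzw
    refine ⟨⟨le_trans (lca_le hxw hyw) hxz, fun h => hzw ?_⟩, le_antisymm ?_ ?_⟩
    · exact le_trans (le_lca_right x z) (h ▸ lca_le hxw hyw)
    · exact lca_le (le_trans hxw hyz) (le_lca_right y z)
    · exact lca_le (le_trans hyw hxz) (le_lca_right x z)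

theorem displaysTriple.map {T T' : PPTree} {f : T.V → T'.V}
    (hf : ∀ a b, T'.le (f a) (f b) ↔ T.le a b) {x y z : T.V} (h : displaysTriple T x y z) :
    displaysTriple T' (f x) (f y) (f z) := by
  obtain ⟨w, hx, hy, hz⟩ := displaysTriple_iff.1 h
  exact displaysTriple_iff.2 ⟨f w, (hf x w).2 hx, (hf y w).2 hy, fun h => hz ((hf z w).1 h)⟩

namespace PPTree

variable {T : PPTree}

variable (T) in
def children (v : T.V) : Finset T.V := Finset.univ.filter fun u => T.parent u = v ∧ u ≠ v

theorem mem_children {u v : T.V} : u ∈ T.children v ↔ T.parent u = v ∧ u ≠ v := by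
  simp [children]

theorem children_root : T.children T.root = {T.rho} := by
  ext u
  rw [mem_children, Finset.mem_singleton]
  constructor
  · exact fun ⟨hp, hu⟩ => eq_rho hu hp
  · rintro rfl
    exact ⟨parent_rho, T.rho_ne_root⟩

variable (T) in
/-- The subtraction is truncated: only vertices with more than two children contribute. -/
def excess : ℕ := ∑ u : T.V, ((T.children u).card - 2)

theorem isBinary_of_excess_eq_zero (h : T.excess = 0) : IsBinary T := by
  intro v ⟨hv, hleaf⟩
  have hchild : ∃ u, T.parent u = v ∧ u ≠ v := by
    by_contra! hcon
    exact hleaf hcon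
  obtain ⟨a, b, ha, hb, hab, hav, hbv⟩ := T.phylo v hv hchild
  refine ⟨a, b, hab, ha, hb, hav, hbv, fun c hc hcv => ?_⟩
  by_contra! hne
  have h3 : 2 < (T.children v).card :=
    Finset.two_lt_card.2 ⟨a, mem_children.2 ⟨ha, hav⟩, b, mem_children.2 ⟨hb, hbv⟩,
      c, mem_children.2 ⟨hc, hcv⟩, hab, Ne.symm hne.1, Ne.symm hne.2⟩
  have h0 := Finset.sum_eq_zero_iff.1 h v (Finset.mem_univ v)
  omega

variable {v c₁ : T.V}

variable (T) in
/-- The parent map after inserting a new vertex `none` below `v` and moving all children of `v`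
except `c₁` below it. -/
def resolveParent (v c₁ : T.V) : Option T.V → Option T.V
  | none => some v
  | some u => if u ∈ (T.children v).erase c₁ then none else some (T.parent u)

theorem resolveParent_some_of_mem {u : T.V} (h : u ∈ (T.children v).erase c₁) :
    T.resolveParent v c₁ (some u) = none :=
  if_pos h

theorem resolveParent_some_of_notMem {u : T.V} (h : u ∉ (T.children v).erase c₁) :
    T.resolveParent v c₁ (some u) = some (T.parent u) :=
  if_neg h

theorem resolveParent_some_eq_some_iff {c u : T.V} (hu : u ≠ v) :
    T.resolveParent v c₁ (some c) = some u ↔ T.parent c = u := by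
  by_cases h : c ∈ (T.children v).erase c₁
  · rw [resolveParent_some_of_mem h]
    have hcv := (mem_children.1 (Finset.mem_of_mem_erase h)).1
    exact ⟨nofun, fun hcu => absurd (hcu.symm.trans hcv) hu⟩
  · rw [resolveParent_some_of_notMem h, Option.some_inj]

theorem le_getD_resolveParent (o : Option T.V) :
    T.le (o.getD v) ((T.resolveParent v c₁ o).getD v) := by
  rcases o with _ | u
  · exact le_refl v
  · by_cases h : u ∈ (T.children v).erase c₁
    · rw [resolveParent_some_of_mem h]
      exact (mem_children.1 (Finset.mem_of_mem_erase h)).1 ▸ le_parent u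
    · rw [resolveParent_some_of_notMem h]
      exact le_parent u

theorem le_getD_iterate_resolveParent (n : ℕ) (o : Option T.V) :
    T.le (o.getD v) (((T.resolveParent v c₁)^[n] o).getD v) := by
  induction n generalizing o with
  | zero => exact le_refl _
  | succ n ih => exact le_trans (le_getD_resolveParent o) (ih _)

theorem exists_iterate_resolveParent_eq_parent (x : T.V) :
    ∃ k, (T.resolveParent v c₁)^[k] (some x) = some (T.parent x) := by
  by_cases h : x ∈ (T.children v).erase c₁
  · refine ⟨2, ?_⟩
    change T.resolveParent v c₁ (T.resolveParent v c₁ (some x)) = _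
    rw [resolveParent_some_of_mem h, (mem_children.1 (Finset.mem_of_mem_erase h)).1]
    rfl
  · exact ⟨1, resolveParent_some_of_notMem h⟩

theorem exists_iterate_resolveParent_of_le {x z : T.V} (h : T.le x z) :
    ∃ n, (T.resolveParent v c₁)^[n] (some x) = some z := by
  obtain ⟨n, rfl⟩ := h
  induction n with
  | zero => exact ⟨0, rfl⟩
  | succ n ih =>
    obtain ⟨m, hm⟩ := ih
    obtain ⟨k, hk⟩ :=
      exists_iterate_resolveParent_eq_parent (v := v) (c₁ := c₁) (T.parent^[n] x)
    exact ⟨k + m, by rw [Function.iterate_add_apply, hm, hk, Function.iterate_succ_apply']⟩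

theorem resolveParent_root : T.resolveParent v c₁ (some T.root) = some T.root := by
  rw [resolveParent_some_of_notMem, T.parent_root]
  intro h
  obtain ⟨hp, hne⟩ := mem_children.1 (Finset.mem_of_mem_erase h)
  exact hne (T.parent_root.symm.trans hp)

theorem exists_iterate_resolveParent_eq_root (o : Option T.V) :
    ∃ n, (T.resolveParent v c₁)^[n] o = some T.root := by
  rcases o with _ | u
  · obtain ⟨n, hn⟩ := exists_iterate_resolveParent_of_le (c₁ := c₁) (le_root v)
    exact ⟨n + 1, hn⟩
  · exact exists_iterate_resolveParent_of_le (le_root u)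

theorem existsUnique_resolveParent_eq_root (hv : v ≠ T.root) :
    ∃! o, o ≠ some T.root ∧ T.resolveParent v c₁ o = some T.root := by
  refine ⟨some T.rho, ⟨by simpa using T.rho_ne_root,
    (resolveParent_some_eq_some_iff hv.symm).2 parent_rho⟩, ?_⟩
  rintro (_ | u) ⟨hu, hp⟩
  · exact absurd (Option.some_inj.1 hp) hv
  · rw [eq_rho (fun h => hu (congrArg some h)) ((resolveParent_some_eq_some_iff hv.symm).1 hp)]

theorem resolveParent_phylo (hc₁ : c₁ ∈ T.children v) (hv : 2 < (T.children v).card)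
    (o : Option T.V) (ho : o ≠ some T.root)
    (hchild : ∃ u, T.resolveParent v c₁ u = o ∧ u ≠ o) :
    ∃ u w, T.resolveParent v c₁ u = o ∧ T.resolveParent v c₁ w = o ∧
      u ≠ w ∧ u ≠ o ∧ w ≠ o := by
  rcases o with _ | u
  · have h2 : 1 < ((T.children v).erase c₁).card := by
      rw [Finset.card_erase_of_mem hc₁]
      omega
    obtain ⟨a, ha, b, hb, hab⟩ := Finset.one_lt_card.1 h2
    exact ⟨some a, some b, resolveParent_some_of_mem ha, resolveParent_some_of_mem hb,
      by simpa using hab, nofun, nofun⟩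
  by_cases huv : u = v
  · subst huv
    obtain ⟨hp, hne⟩ := mem_children.1 hc₁
    refine ⟨some c₁, none, ?_, rfl, nofun, by simpa using hne, nofun⟩
    rw [resolveParent_some_of_notMem (Finset.notMem_erase c₁ _), hp]
  obtain ⟨_ | c, hc, hcu⟩ := hchild
  · exact absurd (Option.some_inj.1 hc) (Ne.symm huv)
  obtain ⟨a, b, ha, hb, hab, hau, hbu⟩ := T.phylo u (fun h => ho (congrArg some h))
    ⟨c, (resolveParent_some_eq_some_iff huv).1 hc, fun h => hcu (congrArg some h)⟩
  exact ⟨some a, some b, (resolveParent_some_eq_some_iff huv).2 ha,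
    (resolveParent_some_eq_some_iff huv).2 hb, by simpa using hab, by simpa using hau,
    by simpa using hbu⟩

theorem ne_root_of_two_lt_card_children (hv : 2 < (T.children v).card) : v ≠ T.root := by
  rintro rfl
  rw [children_root, Finset.card_singleton] at hv
  omega

variable (T) in
@[reducible]
def resolve (v c₁ : T.V) (hc₁ : c₁ ∈ T.children v) (hv : 2 < (T.children v).card) :
    PPTree where
  V := Option T.V
  root := some T.root
  parent := T.resolveParent v c₁
  parent_root := resolveParent_root
  reach := exists_iterate_resolveParent_eq_root
  planted := existsUnique_resolveParent_eq_root (ne_root_of_two_lt_card_children hv)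
  phylo := resolveParent_phylo hc₁ hv

variable {hc₁ : c₁ ∈ T.children v} {hv : 2 < (T.children v).card}

theorem resolve_le_some_some_iff {x z : T.V} :
    (T.resolve v c₁ hc₁ hv).le (some x) (some z) ↔ T.le x z := by
  constructor
  · rintro ⟨n, hn⟩
    have h := le_getD_iterate_resolveParent (v := v) (c₁ := c₁) n (some x)
    rwa [show (T.resolveParent v c₁)^[n] (some x) = some z from hn] at h
  · exact exists_iterate_resolveParent_of_le

theorem resolve_isLeaf_some_iff {u : T.V} :
    (T.resolve v c₁ hc₁ hv).isLeaf (some u) ↔ T.isLeaf u := by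
  obtain ⟨hc₁v, hc₁ne⟩ := mem_children.1 hc₁
  have hv_leaf : ¬ T.isLeaf v := fun h => hc₁ne (h c₁ hc₁v)
  constructor
  · intro hu c hc
    have huv : u ≠ v := by
      rintro rfl
      exact hc₁ne (Option.some_inj.1 (hu (some c₁)
        ((resolveParent_some_of_notMem (Finset.notMem_erase c₁ _)).trans (congrArg some hc₁v))))
    exact Option.some_inj.1 (hu (some c) ((resolveParent_some_eq_some_iff huv).2 hc))
  · intro hu o ho
    have huv : u ≠ v := by
      rintro rfl
      exact hv_leaf hu
    rcases o with _ | c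
    · exact absurd (Option.some_inj.1 ho) (Ne.symm huv)
    · exact congrArg some (hu c ((resolveParent_some_eq_some_iff huv).1 ho))

theorem resolve_not_isLeaf_none : ¬ (T.resolve v c₁ hc₁ hv).isLeaf none := by
  intro h
  have h1 : 0 < ((T.children v).erase c₁).card := by
    rw [Finset.card_erase_of_mem hc₁]
    omega
  obtain ⟨a, ha⟩ := Finset.card_pos.1 h1
  exact Option.some_ne_none a (h (some a) (resolveParent_some_of_mem ha))

theorem children_resolve_none_subset :
    (T.resolve v c₁ hc₁ hv).children none ⊆ ((T.children v).erase c₁).image some := by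
  intro o ho
  obtain ⟨hp, hne⟩ := mem_children.1 ho
  rcases o with _ | c
  · exact absurd rfl hne
  by_cases h : c ∈ (T.children v).erase c₁
  · exact Finset.mem_image_of_mem some h
  · exact absurd ((resolveParent_some_of_notMem h).symm.trans hp) nofun

theorem children_resolve_some_self_subset :
    (T.resolve v c₁ hc₁ hv).children (some v) ⊆
      ({some c₁, none} : Finset (Option T.V)) := by
  intro o ho
  obtain ⟨hp, hne⟩ := mem_children.1 ho
  rcases o with _ | c
  · simp
  by_cases h : c ∈ (T.children v).erase c₁
  · exact absurd ((resolveParent_some_of_mem h).symm.trans hp) nofun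
  · have hcv : T.parent c = v := Option.some_inj.1 ((resolveParent_some_of_notMem h).symm.trans hp)
    have hc : c = c₁ := by
      by_contra hc
      exact h (Finset.mem_erase.2
        ⟨hc, mem_children.2 ⟨hcv, fun h => hne (congrArg some h)⟩⟩)
    simp [hc]

theorem children_resolve_some_subset {u : T.V} (hu : u ≠ v) :
    (T.resolve v c₁ hc₁ hv).children (some u) ⊆ (T.children u).image some := by
  intro o ho
  obtain ⟨hp, hne⟩ := mem_children.1 ho
  rcases o with _ | c
  · exact absurd (Option.some_inj.1 hp) (Ne.symm hu)
  · exact Finset.mem_image_of_mem some (mem_children.2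
      ⟨(resolveParent_some_eq_some_iff hu).1 hp, fun h => hne (congrArg some h)⟩)

theorem excess_resolve_lt : (T.resolve v c₁ hc₁ hv).excess < T.excess := by
  have hnone : ((T.resolve v c₁ hc₁ hv).children none).card ≤ (T.children v).card - 1 :=
    (Finset.card_le_card children_resolve_none_subset).trans
      (Finset.card_image_le.trans (Finset.card_erase_of_mem hc₁).le)
  have hself : ((T.resolve v c₁ hc₁ hv).children (some v)).card ≤ 2 :=
    (Finset.card_le_card children_resolve_some_self_subset).trans Finset.card_le_two
  have hrest :
      ∑ u ∈ Finset.univ.erase v, (((T.resolve v c₁ hc₁ hv).children (some u)).card - 2)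
      ≤ ∑ u ∈ Finset.univ.erase v, ((T.children u).card - 2) :=
    Finset.sum_le_sum fun u hu => Nat.sub_le_sub_right ((Finset.card_le_card
      (children_resolve_some_subset (Finset.ne_of_mem_erase hu))).trans Finset.card_image_le) 2
  rw [excess, excess, Fintype.sum_option, ← Finset.add_sum_erase _ _ (Finset.mem_univ v),
    ← Finset.add_sum_erase _ _ (Finset.mem_univ v)]
  omega

end PPTree

namespace LeafTree

variable {V : Type} [Fintype V] [DecidableEq V]

def resolve (T : LeafTree V) (v c₁ : T.V) (hc₁ : c₁ ∈ T.children v)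
    (hv : 2 < (T.children v).card) : LeafTree V where
  toPPTree := T.toPPTree.resolve v c₁ hc₁ hv
  emb l := some (T.emb l)
  emb_inj := (Option.some_injective _).comp T.emb_inj
  emb_leaf l := resolve_isLeaf_some_iff.2 (T.emb_leaf l)
  emb_surj := by
    rintro (_ | u) hu
    · exact absurd hu resolve_not_isLeaf_none
    · obtain ⟨l, rfl⟩ := T.emb_surj u (resolve_isLeaf_some_iff.1 hu)
      exact ⟨l, rfl⟩

theorem exists_isBinary_displaysTriple (T : LeafTree V) :
    ∃ T' : LeafTree V, IsBinary T'.toPPTree ∧ ∀ a b c : V,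
      displaysTriple T.toPPTree (T.emb a) (T.emb b) (T.emb c) →
        displaysTriple T'.toPPTree (T'.emb a) (T'.emb b) (T'.emb c) := by
  by_cases hbin : T.excess = 0
  · exact ⟨T, isBinary_of_excess_eq_zero hbin, fun _ _ _ => id⟩
  obtain ⟨v, -, hv⟩ : ∃ v ∈ Finset.univ, (T.children v).card - 2 ≠ 0 :=
    Finset.exists_ne_zero_of_sum_ne_zero hbin
  have hv' : 2 < (T.children v).card := by omega
  obtain ⟨c₁, hc₁⟩ : (T.children v).Nonempty := Finset.card_pos.1 (by omega)
  obtain ⟨T', hT'bin, hT'⟩ := exists_isBinary_displaysTriple (T.resolve v c₁ hc₁ hv')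
  exact ⟨T', hT'bin, fun a b c h => hT' a b c
    (h.map (T' := T.toPPTree.resolve v c₁ hc₁ hv') fun _ _ => resolve_le_some_some_iff)⟩
termination_by T.excess
decreasing_by exact excess_resolve_lt (hc₁ := hc₁) (hv := hv')

end LeafTree

section BestMatch

variable {V Y : Type} [Fintype V] [DecidableEq V] {T : LeafTree V} {σ : V → Y}
  {G : V → V → Prop}

theorem Explains.color_ne (hT : Explains T σ G) {x y : V} (h : G x y) : σ x ≠ σ y :=
  ((hT x y).1 h).1

theorem Explains.exists_adj (hT : Explains T σ G) {x y : V} (h : σ x ≠ σ y) :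
    ∃ y', σ y' = σ y ∧ G x y' := by
  obtain ⟨_, -, ⟨y', hy', rfl⟩, hmin⟩ := exists_least_ancestor
    (P := fun w => ∃ y', σ y' = σ y ∧ T.lca (T.emb x) (T.emb y') = w)
    ⟨_, le_lca_left (T.emb x) (T.emb y), y, rfl, rfl⟩
  refine ⟨y', hy', (hT x y').2 ⟨hy' ▸ h, fun y'' hy'' => ?_⟩⟩
  exact hmin _ (le_lca_left _ _) ⟨y'', hy''.trans hy', rfl⟩

theorem Explains.displaysTriple_of_informative (hT : Explains T σ G) {a b b' : V}
    (h : Informative G σ a b b') :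
    displaysTriple T.toPPTree (T.emb a) (T.emb b) (T.emb b') := by
  obtain ⟨-, -, -, hσab, hσbb', hab, hab'⟩ := h
  obtain ⟨y', hy', hlt⟩ : ∃ y', σ y' = σ b' ∧
      ¬ T.le (T.lca (T.emb a) (T.emb b')) (T.lca (T.emb a) (T.emb y')) := by
    by_contra! hcon
    exact hab' ((hT a b').2 ⟨hσbb' ▸ hσab, hcon⟩)
  refine displaysTriple_iff.2 ⟨_, le_lca_left _ _, le_lca_right _ _, fun hb' => hlt ?_⟩
  exact le_trans (lca_le (le_lca_left _ _) hb') (((hT a b).1 hab).2 y' (hy'.trans hσbb'.symm))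

theorem IsBinary.eq_of_ne_of_ne {S : PPTree} (hS : IsBinary S) {u c c' c'' : S.V}
    (hu : S.inner u) (hc : S.parent c = u) (hc' : S.parent c' = u) (hc'' : S.parent c'' = u)
    (hcu : c ≠ u) (hc'u : c' ≠ u) (hc''u : c'' ≠ u) (h' : c' ≠ c) (h'' : c'' ≠ c) :
    c' = c'' := by
  obtain ⟨d, d', -, -, -, -, -, hall⟩ := hS u hu
  rcases hall c hc hcu with rfl | rfl <;> rcases hall c' hc' hc'u with rfl | rfl <;>
    rcases hall c'' hc'' hc''u with rfl | rfl <;> tauto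

theorem Explains.displaysTriple_of_forbidden (hT : Explains T σ G) (hbin : IsBinary T.toPPTree)
    {a b b' : V} (h : Forbidden G σ a b b') :
    displaysTriple T.toPPTree (T.emb b) (T.emb b') (T.emb a) := by
  obtain ⟨hab, hab', -, -, hσbb', hGab, hGab'⟩ := h
  obtain ⟨u, hu⟩ : ∃ u, T.lca (T.emb a) (T.emb b) = u := ⟨_, rfl⟩
  have hu' : T.lca (T.emb a) (T.emb b') = u :=
    hu ▸ le_antisymm (((hT a b').1 hGab').2 b hσbb') (((hT a b).1 hGab).2 b' hσbb'.symm)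
  have ha : T.lt (T.emb a) u := hu ▸ lt_lca_of_isLeaf (T.emb_leaf a) (T.emb_inj.ne hab)
  have hb : T.lt (T.emb b) u := hu ▸ lca_comm (T.emb b) (T.emb a) ▸
    lt_lca_of_isLeaf (T.emb_leaf b) (T.emb_inj.ne hab.symm)
  have hb' : T.lt (T.emb b') u := hu' ▸ lca_comm (T.emb b') (T.emb a) ▸
    lt_lca_of_isLeaf (T.emb_leaf b') (T.emb_inj.ne hab'.symm)
  have hinner : T.inner u :=
    ⟨hu ▸ lca_ne_root (ne_root_of_isLeaf (T.emb_leaf a)) (ne_root_of_isLeaf (T.emb_leaf b)),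
      fun hleaf => ha.2 (eq_of_le_of_isLeaf hleaf ha.1)⟩
  obtain ⟨ca, hca, hcau, hac⟩ := exists_child_of_lt ha
  obtain ⟨cb, hcb, hcbu, hbc⟩ := exists_child_of_lt hb
  obtain ⟨cb', hcb', hcb'u, hb'c⟩ := exists_child_of_lt hb'
  have hcba : cb ≠ ca := by
    rintro rfl
    exact not_le_of_parent_eq hca hcau (hu ▸ lca_le hac hbc)
  have hcb'a : cb' ≠ ca := by
    rintro rfl
    exact not_le_of_parent_eq hca hcau (hu' ▸ lca_le hac hb'c)
  have hcbb' : cb = cb' :=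
    hbin.eq_of_ne_of_ne hinner hca hcb hcb' hcau hcbu hcb'u hcba hcb'a
  refine displaysTriple_iff.2 ⟨cb, hbc, hcbb' ▸ hb'c, fun hac' => ?_⟩
  exact not_le_of_parent_eq hcb hcbu (hu ▸ lca_le hac' hbc)

theorem explains_of_displaysTriple (hcol : ∀ {x y}, G x y → σ x ≠ σ y)
    (hadj : ∀ {x y}, σ x ≠ σ y → ∃ y', σ y' = σ y ∧ G x y')
    (hR : ∀ a b b' : V, Informative G σ a b b' →
      displaysTriple T.toPPTree (T.emb a) (T.emb b) (T.emb b'))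
    (hF : ∀ a b b' : V, Forbidden G σ a b b' →
      displaysTriple T.toPPTree (T.emb b) (T.emb b') (T.emb a)) :
    Explains T σ G := by
  intro x y
  constructor
  · intro hxy
    have hσ := hcol hxy
    refine ⟨hσ, fun y' hy' => ?_⟩
    have hσ' : σ x ≠ σ y' := hy' ▸ hσ
    by_cases hyy' : y = y'
    · exact hyy' ▸ le_refl _
    by_cases hxy' : G x y'
    · have hd := hF x y' y
        ⟨hσ'.imp (congrArg σ), hσ.imp (congrArg σ), Ne.symm hyy', hσ', hy', hxy', hxy⟩
      rw [lca_comm, ← hd.2, lca_comm]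
      exact le_refl _
    · exact (hR x y y' ⟨hσ.imp (congrArg σ), hσ'.imp (congrArg σ), hyy', hσ, hy'.symm, hxy,
        hxy'⟩).1.1
  · rintro ⟨hσ, hmin⟩
    by_contra hxy
    obtain ⟨y', hy', hxy'⟩ := hadj hσ
    have hσ' : σ x ≠ σ y' := hy' ▸ hσ
    have hd := hR x y' y ⟨hσ'.imp (congrArg σ), hσ.imp (congrArg σ),
      fun h => hxy (h ▸ hxy'), hσ', hy', hxy', hxy⟩
    exact hd.1.2 (le_antisymm hd.1.1 (hmin y' hy'))

end BestMatch

/-- A best match graph `(G,σ)` is binary explainable iff the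
triple set `R^B(G,σ) = R(G,σ) ∪ { bb'|a : ab|b' ∈ F(G,σ) }` is consistent,
i.e. some tree on the leaf set `V` displays all of its triples. -/
theorem binary_explainable_iff_RB_consistent
    {V Y : Type} [Fintype V] [DecidableEq V]
    (G : V → V → Prop) (σ : V → Y)
    (hBMG : ∃ T : LeafTree V, Explains T σ G) :
    (∃ T : LeafTree V, IsBinary T.toPPTree ∧ Explains T σ G) ↔
    (∃ T : LeafTree V,
        (∀ a b b' : V, Informative G σ a b b' →
            displaysTriple T.toPPTree (T.emb a) (T.emb b) (T.emb b')) ∧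
        (∀ a b b' : V, Forbidden G σ a b b' →
            displaysTriple T.toPPTree (T.emb b) (T.emb b') (T.emb a))) := by
  obtain ⟨T₀, hT₀⟩ := hBMG
  constructor
  · rintro ⟨T, hbin, hT⟩
    exact ⟨T, fun _ _ _ => hT.displaysTriple_of_informative,
      fun _ _ _ => hT.displaysTriple_of_forbidden hbin⟩
  · rintro ⟨T, hR, hF⟩
    obtain ⟨T', hbin, hT'⟩ := T.exists_isBinary_displaysTriple
    exact ⟨T', hbin, explains_of_displaysTriple hT₀.color_ne hT₀.exists_adj
      (fun a b b' h => hT' _ _ _ (hR a b b' h)) (fun a b b' h => hT' _ _ _ (hF a b b' h))⟩
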